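/- Let G be a connected graph and suppose N(v)\{w} ⊇ N(w)\{v} for distinct vertices v, w. If S is a set of vertices containing both v and w such that G[S] admits an elimination tree of depth d rooted at w, then G[S] admits an elimination tree of depth at most d rooted at v. -/
import Mathlib


open scoped Classical

/-- `nbhd G S` is the set `N(S)` of vertices outside `S` adjacent to some vertex of `S`. -/
def nbhd {V : Type*} (G : SimpleGraph V) (S : Set V) : Set V :=
  {u | u ∉ S ∧ ∃ s ∈ S, G.Adj u s}

/-- `compOf G A c` is the vertex set of the connected component of `c` in `G[A]`. -/
def compOf {V : Type*} (G : SimpleGraph V) (A : Set V) (c : V) : Set V :=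
  {x | ∃ (hx : x ∈ A) (hc : c ∈ A), (G.induce A).Reachable ⟨x, hx⟩ ⟨c, hc⟩}

/-- `IsElimTree G S r anc` : `anc` is the (reflexive) ancestor relation of an
elimination tree of `G[S]` with root `r`, following the recursive definition:
a one-vertex graph is its own elimination tree; otherwise the root `r` is made
the parent of the roots of elimination trees of the components of `G[S] - r`. -/
inductive IsElimTree {V : Type*} (G : SimpleGraph V) : Set V → V → (V → V → Prop) → Prop where
  | single (v : V) : IsElimTree G {v} v (fun a b => a = v ∧ b = v)
  | node (S : Set V) (r : V) (hr : r ∈ S) (hS : S ≠ {r})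
      (root : V → V) (sub : V → V → V → Prop)
      (hsub : ∀ c ∈ S \ {r}, IsElimTree G (compOf G (S \ {r}) c) (root c) (sub c))
      (hcong : ∀ c ∈ S \ {r}, ∀ c' ∈ S \ {r},
        compOf G (S \ {r}) c = compOf G (S \ {r}) c' → root c = root c' ∧ sub c = sub c')
      (anc : V → V → Prop)
      (hanc : ∀ a b, anc a b ↔ (a = r ∧ b ∈ S) ∨ ∃ c ∈ S \ {r}, sub c a b) :
      IsElimTree G S r anc

/-- The depth (maximum number of vertices on a root-to-leaf path) of a rooted forest
on vertex set `S`, given by its reflexive ancestor relation `anc`. -/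
noncomputable def ancDepth {V : Type*} (anc : V → V → Prop) (S : Set V) : ℕ :=
  sSup ((fun b => Set.ncard {a | anc a b}) '' S)

/-- A treedepth decomposition of `G`: a rooted forest on the vertex set of `G`
(given by its reflexive ancestor partial order, in which the set of ancestors of any
vertex is a chain) such that every edge of `G` joins an ancestor-descendant pair. -/
structure TDDecomp {V : Type*} (G : SimpleGraph V) where
  anc : V → V → Prop
  refl : ∀ v, anc v v
  trans : ∀ a b c, anc a b → anc b c → anc a c
  antisymm : ∀ a b, anc a b → anc b a → a = b
  chain : ∀ a b v, anc a v → anc b v → anc a b ∨ anc b a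
  covers : ∀ u v, G.Adj u v → anc u v ∨ anc v u

/-- Depth of a treedepth decomposition. -/
noncomputable def TDDecomp.depth {V : Type*} {G : SimpleGraph V} (F : TDDecomp G) : ℕ :=
  ancDepth F.anc Set.univ

/-- Treedepth of `G`: minimum depth of a treedepth decomposition of `G`. -/
noncomputable def treedepth {V : Type*} (G : SimpleGraph V) : ℕ :=
  sInf {d | ∃ F : TDDecomp G, F.depth = d}

/-- `v` dominates `w`. -/
def Dominates {V : Type*} [LinearOrder V] (G : SimpleGraph V) (v w : V) : Prop :=
  v ≠ w ∧ ((G.neighborSet w \ {v}) ⊂ (G.neighborSet v \ {w}) ∨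
    (G.neighborSet v \ {w} = G.neighborSet w \ {v} ∧ w < v))

/-- The score of an elimination tree (given by its ancestor relation `anc`):
the lexicographically least pair `(depth of u, u)` over vertices `u` dominated by
one of their descendants, and `⊤ = (∞,∞)` if no such vertex exists. -/
noncomputable def score {V : Type*} [Fintype V] [LinearOrder V] (G : SimpleGraph V)
    (anc : V → V → Prop) : WithTop (Lex (ℕ × V)) :=
  Finset.min ((Finset.univ.filter
      (fun u => ∃ w, anc u w ∧ Dominates G w u)).image
    (fun u => toLex (Set.ncard {a | anc a u}, u)))
section Helpers

variable {V : Type*} {G : SimpleGraph V}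

/-- Connectivity of a vertex set, via its induced subgraph. -/
def ESConn (G : SimpleGraph V) (D : Set V) : Prop :=
  ∀ ⦃x⦄ (hx : x ∈ D) ⦃y⦄ (hy : y ∈ D), (G.induce D).Reachable ⟨x, hx⟩ ⟨y, hy⟩

lemma reach_mono {D A : Set V} (h : D ⊆ A) {x y : V} (hx : x ∈ D) (hy : y ∈ D)
    (hr : (G.induce D).Reachable ⟨x, hx⟩ ⟨y, hy⟩) :
    (G.induce A).Reachable ⟨x, h hx⟩ ⟨y, h hy⟩ :=
  hr.map (⟨fun z => ⟨z.1, h z.2⟩, fun {a b} hab => hab⟩ : G.induce D →g G.induce A)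

lemma mem_compOf_self {A : Set V} {c : V} (hc : c ∈ A) : c ∈ compOf G A c :=
  ⟨hc, hc, SimpleGraph.Reachable.refl _⟩

lemma compOf_subset {A : Set V} {c : V} : compOf G A c ⊆ A := fun _ hx => hx.1

lemma compOf_eq_of_mem {A : Set V} {c x : V} (hx : x ∈ compOf G A c) :
    compOf G A x = compOf G A c := by
  obtain ⟨hxA, hcA, rxc⟩ := hx
  ext y
  constructor
  · rintro ⟨hyA, hcA2, ryx⟩
    exact ⟨hyA, hcA, ryx.trans rxc⟩
  · rintro ⟨hyA, hcA2, ryc⟩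
    exact ⟨hyA, hxA, ryc.trans rxc.symm⟩

lemma adj_mem_compOf {A : Set V} {c x y : V} (hx : x ∈ compOf G A c) (hy : y ∈ A)
    (hadj : G.Adj y x) : y ∈ compOf G A c := by
  obtain ⟨hxA, hcA, rxc⟩ := hx
  exact ⟨hy, hcA, (SimpleGraph.Adj.reachable (show (G.induce A).Adj ⟨y, hy⟩ ⟨x, hxA⟩ from hadj)).trans rxc⟩

lemma subset_compOf {A D : Set V} {x : V} (hDA : D ⊆ A) (hconn : ESConn G D) (hx : x ∈ D) :
    D ⊆ compOf G A x := fun y hy => ⟨hDA hy, hDA hx, reach_mono hDA hy hx (hconn hy hx)⟩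

lemma walk_in_comp {A : Set V} {c : V} :
    ∀ (u t : ↑A) (_ : (G.induce A).Walk u t) (hu : u.1 ∈ compOf G A c),
      ∃ ht : t.1 ∈ compOf G A c,
        (G.induce (compOf G A c)).Reachable ⟨u.1, hu⟩ ⟨t.1, ht⟩ := by
  intro u t p
  induction p with
  | nil => exact fun hu => ⟨hu, SimpleGraph.Reachable.refl _⟩
  | @cons a b t h q ih =>
    intro ha
    have hb : b.1 ∈ compOf G A c := adj_mem_compOf ha b.2 (SimpleGraph.Adj.symm h)
    obtain ⟨ht, hr⟩ := ih hb
    exact ⟨ht, (SimpleGraph.Adj.reachable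
      (show (G.induce (compOf G A c)).Adj ⟨a.1, ha⟩ ⟨b.1, hb⟩ from h)).trans hr⟩

lemma compOf_conn {A : Set V} {c : V} : ESConn G (compOf G A c) := by
  intro x hx y hy
  obtain ⟨hxA, hcA, rxc⟩ := hx
  obtain ⟨hyA, -, ryc⟩ := hy
  have rxy : (G.induce A).Reachable ⟨x, hxA⟩ ⟨y, hyA⟩ := rxc.trans ryc.symm
  obtain ⟨p⟩ := rxy
  obtain ⟨ht, hr⟩ := walk_in_comp (c := c) ⟨x, hxA⟩ ⟨y, hyA⟩ p ⟨hxA, hcA, rxc⟩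
  exact hr

lemma walk_absorb {A X : Set V} {w v : V}
    (hXA : ∀ z ∈ X, z ≠ w → z ∈ A)
    (hNv : ∀ z ∈ X, z ≠ w → G.Adj z w → z ∈ compOf G A v) :
    ∀ (x y : ↑X) (_ : (G.induce X).Walk x y), y.1 = w → x.1 ≠ w → x.1 ∈ compOf G A v := by
  intro x y p
  induction p with
  | nil => intro hyw hxw; exact absurd hyw hxw
  | @cons a b t h q ih =>
    intro hyw hxw
    by_cases hbw : b.1 = w
    · exact hNv a.1 a.2 hxw (by rw [← hbw]; exact h)
    · exact adj_mem_compOf (ih hyw hbw) (hXA a.1 a.2 hxw) h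

end Helpers
section Helpers2

variable {V : Type*} {G : SimpleGraph V}

lemma elim_support {S : Set V} {r : V} {anc : V → V → Prop}
    (hT : IsElimTree G S r anc) : ∀ a b, anc a b → a ∈ S ∧ b ∈ S := by
  induction hT with
  | single u =>
    intro a b hab
    exact ⟨by simp [hab.1], by simp [hab.2]⟩
  | node S r hr hS root sub hsub hcong anc hanc IH =>
    intro a b hab
    rcases (hanc a b).1 hab with ⟨rfl, hb⟩ | ⟨c, hc, hs⟩
    · exact ⟨hr, hb⟩
    · obtain ⟨ha', hb'⟩ := IH c hc a b hs
      exact ⟨(compOf_subset ha').1, (compOf_subset hb').1⟩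

lemma elim_refl {S : Set V} {r : V} {anc : V → V → Prop}
    (hT : IsElimTree G S r anc) : ∀ b ∈ S, anc b b := by
  induction hT with
  | single u => intro b hb; simp_all
  | node S r hr hS root sub hsub hcong anc hanc IH =>
    intro b hb
    by_cases hbr : b = r
    · exact (hanc b b).2 (Or.inl ⟨hbr, hb⟩)
    · have hb' : b ∈ S \ {r} := ⟨hb, hbr⟩
      exact (hanc b b).2 (Or.inr ⟨b, hb', IH b hb' b (mem_compOf_self hb')⟩)

variable [Fintype V]

lemma le_ancDepth {anc : V → V → Prop} {X : Set V} {b : V} (hb : b ∈ X) :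
    Set.ncard {a | anc a b} ≤ ancDepth anc X := by
  apply le_csSup
  · exact ⟨Nat.card V, by
      rintro n ⟨b', hb', rfl⟩
      simpa [Set.ncard_univ] using
        Set.ncard_le_ncard (Set.subset_univ {a | anc a b'}) Set.finite_univ⟩
  · exact ⟨b, hb, rfl⟩

lemma ancDepth_le {anc : V → V → Prop} {X : Set V} {n : ℕ}
    (h : ∀ b ∈ X, Set.ncard {a | anc a b} ≤ n) : ancDepth anc X ≤ n :=
  csSup_le' (by rintro m ⟨b, hb, rfl⟩; exact h b hb)

lemma ancDepth_single (u : V) : ancDepth (fun a b => a = u ∧ b = u) ({u} : Set V) = 1 := by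
  have h1 : {a | a = u ∧ u = u} = ({u} : Set V) := by ext a; simp
  unfold ancDepth
  rw [Set.image_singleton, h1, Set.ncard_singleton, csSup_singleton]

lemma anc_insert {S : Set V} {r : V} {root : V → V} {sub : V → V → V → Prop}
    {anc : V → V → Prop} (hr : r ∈ S)
    (hsub : ∀ c ∈ S \ {r}, IsElimTree G (compOf G (S \ {r}) c) (root c) (sub c))
    (hcong : ∀ c ∈ S \ {r}, ∀ c' ∈ S \ {r},
      compOf G (S \ {r}) c = compOf G (S \ {r}) c' → root c = root c' ∧ sub c = sub c')
    (hanc : ∀ a b, anc a b ↔ (a = r ∧ b ∈ S) ∨ ∃ c ∈ S \ {r}, sub c a b)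
    {c b : V} (hc : c ∈ S \ {r}) (hb : b ∈ compOf G (S \ {r}) c) :
    {a | anc a b} = insert r {a | sub c a b} := by
  ext a
  simp only [Set.mem_setOf_eq, Set.mem_insert_iff]
  rw [hanc]
  constructor
  · rintro (⟨rfl, hbS⟩ | ⟨c', hc', hs⟩)
    · exact Or.inl rfl
    · have hb' : b ∈ compOf G (S \ {r}) c' := (elim_support (hsub c' hc') a b hs).2
      have hcc : compOf G (S \ {r}) c' = compOf G (S \ {r}) c := by
        rw [← compOf_eq_of_mem hb', compOf_eq_of_mem hb]
      rw [(hcong c' hc' c hc hcc).2] at hs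
      exact Or.inr hs
  · rintro (rfl | hs)
    · exact Or.inl ⟨rfl, (compOf_subset hb).1⟩
    · exact Or.inr ⟨c, hc, hs⟩

lemma assemble {D : Set V} {r : V} (hr : r ∈ D) (m : ℕ)
    (h : ∀ c ∈ D \ {r}, ∃ p : V × (V → V → Prop),
      IsElimTree G (compOf G (D \ {r}) c) p.1 p.2 ∧
      ancDepth p.2 (compOf G (D \ {r}) c) ≤ m) :
    ∃ anc' : V → V → Prop, IsElimTree G D r anc' ∧ ancDepth anc' D ≤ m + 1 := by
  by_cases hD : D = {r}
  · subst hD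
    refine ⟨fun a b => a = r ∧ b = r, IsElimTree.single r, ?_⟩
    rw [ancDepth_single]; omega
  · set F : Set V → V × (V → V → Prop) := fun E =>
      if hE : ∃ p : V × (V → V → Prop), IsElimTree G E p.1 p.2 ∧ ancDepth p.2 E ≤ m
      then hE.choose else (r, fun _ _ => False) with hF
    set root' : V → V := fun c => (F (compOf G (D \ {r}) c)).1 with hroot'
    set sub' : V → V → V → Prop := fun c => (F (compOf G (D \ {r}) c)).2 with hsub'def
    have hFspec : ∀ c ∈ D \ {r},
        IsElimTree G (compOf G (D \ {r}) c) (root' c) (sub' c) ∧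
        ancDepth (sub' c) (compOf G (D \ {r}) c) ≤ m := by
      intro c hc
      have hh := h c hc
      have heq : F (compOf G (D \ {r}) c) = hh.choose := dif_pos hh
      show IsElimTree G (compOf G (D \ {r}) c) (F (compOf G (D \ {r}) c)).1
          (F (compOf G (D \ {r}) c)).2 ∧
        ancDepth (F (compOf G (D \ {r}) c)).2 (compOf G (D \ {r}) c) ≤ m
      rw [heq]
      exact hh.choose_spec
    have hcong' : ∀ c ∈ D \ {r}, ∀ c' ∈ D \ {r},
        compOf G (D \ {r}) c = compOf G (D \ {r}) c' → root' c = root' c' ∧ sub' c = sub' c' := by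
      intro c hc c' hc' heq
      exact ⟨congrArg (fun E => (F E).1) heq, congrArg (fun E => (F E).2) heq⟩
    set anc' : V → V → Prop := fun a b => (a = r ∧ b ∈ D) ∨ ∃ c ∈ D \ {r}, sub' c a b with hanc'
    have htree : IsElimTree G D r anc' :=
      IsElimTree.node D r hr hD root' sub' (fun c hc => (hFspec c hc).1) hcong' anc'
        (fun a b => Iff.rfl)
    refine ⟨anc', htree, ancDepth_le ?_⟩
    intro b hb
    by_cases hbr : b = r
    · subst hbr
      have : {a | anc' a b} = {b} := by
        ext a
        simp only [Set.mem_setOf_eq, Set.mem_singleton_iff, hanc']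
        constructor
        · rintro (⟨rfl, _⟩ | ⟨c, hc, hs⟩)
          · rfl
          · exact absurd (compOf_subset (elim_support (hFspec c hc).1 a b hs).2).2
              (by simp)
        · rintro rfl; exact Or.inl ⟨rfl, hb⟩
      rw [this, Set.ncard_singleton]; omega
    · have hb' : b ∈ D \ {r} := ⟨hb, hbr⟩
      have hbE : b ∈ compOf G (D \ {r}) b := mem_compOf_self hb'
      have heq : {a | anc' a b} = insert r {a | sub' b a b} :=
        anc_insert hr (fun c hc => (hFspec c hc).1) hcong' (fun a b => Iff.rfl) hb' hbE
      have hrni : r ∉ {a | sub' b a b} := by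
        intro hrs
        exact (compOf_subset (elim_support (hFspec b hb').1 r b hrs).1).2 rfl
      rw [heq, Set.ncard_insert_of_notMem hrni]
      have h1 : Set.ncard {a | sub' b a b} ≤ ancDepth (sub' b) (compOf G (D \ {r}) b) :=
        le_ancDepth hbE
      have h2 := (hFspec b hb').2
      omega

end Helpers2
section Helpers3

variable {V : Type*} {G : SimpleGraph V}

lemma absorb_into_comp {v w : V}
    (hdom : G.neighborSet w \ {v} ⊆ G.neighborSet v \ {w})
    {A X : Set V} (hvA : v ∈ A) (hvX : v ∉ X) (hwX : w ∈ X)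
    (hXA : ∀ z ∈ X, z ≠ w → z ∈ A) :
    ∀ x (hx : x ∈ X), (G.induce X).Reachable ⟨x, hx⟩ ⟨w, hwX⟩ → x ≠ w →
      x ∈ compOf G A v := by
  have hNv : ∀ z ∈ X, z ≠ w → G.Adj z w → z ∈ compOf G A v := by
    intro z hz hzw hadj
    have hzv : z ≠ v := fun h => hvX (h ▸ hz)
    have h2 : z ∈ G.neighborSet v \ {w} := hdom ⟨hadj.symm, by simpa using hzv⟩
    exact adj_mem_compOf (mem_compOf_self hvA) (hXA z hz hzw)
      ((show G.Adj v z from h2.1).symm)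
  intro x hx hreach hxw
  obtain ⟨p⟩ := hreach
  exact walk_absorb hXA hNv ⟨x, hx⟩ ⟨w, hwX⟩ p rfl hxw

variable [Fintype V]

lemma one_le_ancDepth {S : Set V} {r : V} {anc : V → V → Prop}
    (hr : r ∈ S) (hrr : anc r r) : 1 ≤ ancDepth anc S := by
  have h1 : 0 < Set.ncard {a | anc a r} := (Set.ncard_pos (Set.toFinite _)).2 ⟨r, hrr⟩
  have h2 := le_ancDepth (anc := anc) hr
  omega

lemma subdepth_le {S : Set V} {r : V} {root : V → V} {sub : V → V → V → Prop}
    {anc : V → V → Prop} (hr : r ∈ S)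
    (hsub : ∀ c ∈ S \ {r}, IsElimTree G (compOf G (S \ {r}) c) (root c) (sub c))
    (hcong : ∀ c ∈ S \ {r}, ∀ c' ∈ S \ {r},
      compOf G (S \ {r}) c = compOf G (S \ {r}) c' → root c = root c' ∧ sub c = sub c')
    (hanc : ∀ a b, anc a b ↔ (a = r ∧ b ∈ S) ∨ ∃ c ∈ S \ {r}, sub c a b) :
    ∀ c ∈ S \ {r}, ancDepth (sub c) (compOf G (S \ {r}) c) ≤ ancDepth anc S - 1 := by
  intro c hc
  apply ancDepth_le
  intro b hb
  have heq := anc_insert hr hsub hcong hanc hc hb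
  have hrni : r ∉ {a | sub c a b} := fun hrs =>
    (compOf_subset (elim_support (hsub c hc) r b hrs).1).2 rfl
  have h1 : Set.ncard {a | anc a b} ≤ ancDepth anc S :=
    le_ancDepth (compOf_subset hb).1
  rw [heq, Set.ncard_insert_of_notMem hrni] at h1
  omega

lemma key {v w : V} (hvw : v ≠ w)
    (hdom : G.neighborSet w \ {v} ⊆ G.neighborSet v \ {w})
    {S₀ : Set V} {r₀ : V} {anc₀ : V → V → Prop} (hT : IsElimTree G S₀ r₀ anc₀) :
    w ∉ S₀ → ∀ D : Set V, D ⊆ S₀ ∪ {w} → D.Nonempty → ESConn G D →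
      (w ∈ D → v ∈ S₀ ∧ v ∉ D) →
      ∃ p : V × (V → V → Prop), IsElimTree G D p.1 p.2 ∧
        ancDepth p.2 D ≤ ancDepth anc₀ S₀ := by
  induction hT with
  | single u =>
    intro hw D hDsub hne hconn hwD
    rw [ancDepth_single]
    by_cases hwD' : w ∈ D
    · obtain ⟨hvS, hvD⟩ := hwD hwD'
      have hvu : v = u := by simpa using hvS
      have hDw : D = {w} := by
        rw [Set.eq_singleton_iff_nonempty_unique_mem]
        refine ⟨hne, fun x hx => ?_⟩
        rcases hDsub hx with h1 | h2
        · exfalso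
          have hxu : x = u := by simpa using h1
          exact hvD (by rw [hvu, ← hxu]; exact hx)
        · simpa using h2
      exact ⟨(w, fun a b => a = w ∧ b = w),
        by rw [hDw]; exact IsElimTree.single w,
        by rw [hDw, ancDepth_single]⟩
    · have hDu : D = {u} := by
        rw [Set.eq_singleton_iff_nonempty_unique_mem]
        refine ⟨hne, fun x hx => ?_⟩
        rcases hDsub hx with h1 | h2
        · simpa using h1
        · exact absurd (by rw [← show x = w from h2]; exact hx) hwD'
      exact ⟨(u, fun a b => a = u ∧ b = u),
        by rw [hDu]; exact IsElimTree.single u,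
        by rw [hDu, ancDepth_single]⟩
  | node S r hr hS root sub hsub hcong anc hanc IH =>
    intro hw D hDsub hne hconn hwD
    have hδ1 : 1 ≤ ancDepth anc S :=
      one_le_ancDepth hr ((hanc r r).2 (Or.inl ⟨rfl, hr⟩))
    have hsubdep := subdepth_le hr hsub hcong hanc
    have hwS : ∀ c : V, w ∉ compOf G (S \ {r}) c :=
      fun c h => hw (compOf_subset h).1
    by_cases hrD : r ∈ D
    · have hcomp : ∀ c ∈ D \ {r}, ∃ p : V × (V → V → Prop),
          IsElimTree G (compOf G (D \ {r}) c) p.1 p.2 ∧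
          ancDepth p.2 (compOf G (D \ {r}) c) ≤ ancDepth anc S - 1 := by
        intro c hc
        have hEconn : ESConn G (compOf G (D \ {r}) c) := compOf_conn
        have hEne : (compOf G (D \ {r}) c).Nonempty := ⟨c, mem_compOf_self hc⟩
        have hEsub : compOf G (D \ {r}) c ⊆ D \ {r} := compOf_subset
        by_cases hwE : w ∈ compOf G (D \ {r}) c
        · obtain ⟨hvS, hvD⟩ := hwD (hEsub hwE).1
          have hvr : v ≠ r := by rintro rfl; exact hvD hrD
          have hvSr : v ∈ S \ {r} := ⟨hvS, hvr⟩
          have hwDr : w ∈ D \ {r} := hEsub hwE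
          have hXA : ∀ z ∈ D \ {r}, z ≠ w → z ∈ S \ {r} := by
            intro z hz hzw
            rcases hDsub hz.1 with h1 | h2
            · exact ⟨h1, hz.2⟩
            · exact absurd (show z = w from h2) hzw
          have hEC : compOf G (D \ {r}) c ⊆ compOf G (S \ {r}) v ∪ {w} := by
            intro x hx
            by_cases hxw : x = w
            · exact Or.inr hxw
            · obtain ⟨hxX, hcX, rxc⟩ := hx
              obtain ⟨hwX, hcX', rwc⟩ := hwE
              exact Or.inl (absorb_into_comp hdom hvSr (fun h => hvD h.1) hwDr hXA
                x hxX (rxc.trans rwc.symm) hxw)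
          obtain ⟨p, hp1, hp2⟩ := IH v hvSr (hwS v) (compOf G (D \ {r}) c) hEC hEne hEconn
            (fun _ => ⟨mem_compOf_self hvSr, fun hvE => hvD (hEsub hvE).1⟩)
          exact ⟨p, hp1, hp2.trans (hsubdep v hvSr)⟩
        · have hES : compOf G (D \ {r}) c ⊆ S \ {r} := by
            intro x hx
            have hxw : x ≠ w := by rintro rfl; exact hwE hx
            rcases hDsub (hEsub hx).1 with h1 | h2
            · exact ⟨h1, (hEsub hx).2⟩
            · exact absurd (show x = w from h2) hxw
          have hcS : c ∈ S \ {r} := hES (mem_compOf_self hc)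
          have hEC : compOf G (D \ {r}) c ⊆ compOf G (S \ {r}) c :=
            subset_compOf hES hEconn (mem_compOf_self hc)
          obtain ⟨p, hp1, hp2⟩ := IH c hcS (hwS c) _ (fun x hx => Or.inl (hEC hx))
            hEne hEconn (fun hwE' => absurd hwE' hwE)
          exact ⟨p, hp1, hp2.trans (hsubdep c hcS)⟩
      obtain ⟨anc', htree, hdep⟩ := assemble hrD _ hcomp
      refine ⟨(r, anc'), htree, ?_⟩
      show ancDepth anc' D ≤ _
      omega
    · by_cases hwD' : w ∈ D
      · obtain ⟨hvS, hvD⟩ := hwD hwD'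
        by_cases hvr : v = r
        · -- root the tree of D at w
          have hcomp : ∀ c ∈ D \ {w}, ∃ p : V × (V → V → Prop),
              IsElimTree G (compOf G (D \ {w}) c) p.1 p.2 ∧
              ancDepth p.2 (compOf G (D \ {w}) c) ≤ ancDepth anc S - 1 := by
            intro c hc
            have hEconn : ESConn G (compOf G (D \ {w}) c) := compOf_conn
            have hES : compOf G (D \ {w}) c ⊆ S \ {r} := by
              intro x hx
              have hx' : x ∈ D \ {w} := compOf_subset hx
              have hxr : x ≠ r := by rintro rfl; exact hrD hx'.1
              rcases hDsub hx'.1 with h1 | h2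
              · exact ⟨h1, hxr⟩
              · exact absurd (show x = w from h2) hx'.2
            have hcS : c ∈ S \ {r} := hES (mem_compOf_self hc)
            have hEC := subset_compOf hES hEconn (mem_compOf_self hc)
            obtain ⟨p, hp1, hp2⟩ := IH c hcS (hwS c) _ (fun x hx => Or.inl (hEC hx))
              ⟨c, mem_compOf_self hc⟩ hEconn
              (fun hwE => absurd rfl (compOf_subset hwE).2)
            exact ⟨p, hp1, hp2.trans (hsubdep c hcS)⟩
          obtain ⟨anc', htree, hdep⟩ := assemble hwD' _ hcomp
          refine ⟨(w, anc'), htree, ?_⟩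
          show ancDepth anc' D ≤ _
          omega
        · have hvSr : v ∈ S \ {r} := ⟨hvS, hvr⟩
          have hXA : ∀ z ∈ D, z ≠ w → z ∈ S \ {r} := by
            intro z hz hzw
            rcases hDsub hz with h1 | h2
            · exact ⟨h1, by rintro rfl; exact hrD hz⟩
            · exact absurd (show z = w from h2) hzw
          have hDC : D ⊆ compOf G (S \ {r}) v ∪ {w} := by
            intro x hx
            by_cases hxw : x = w
            · exact Or.inr hxw
            · exact Or.inl (absorb_into_comp hdom hvSr hvD hwD' hXA
                x hx (hconn hx hwD') hxw)
          obtain ⟨p, hp1, hp2⟩ := IH v hvSr (hwS v) D hDC hne hconn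
            (fun _ => ⟨mem_compOf_self hvSr, hvD⟩)
          exact ⟨p, hp1, hp2.trans ((hsubdep v hvSr).trans (Nat.sub_le _ _))⟩
      · obtain ⟨c, hc⟩ := hne
        have hDS : D ⊆ S \ {r} := by
          intro z hz
          rcases hDsub hz with h1 | h2
          · exact ⟨h1, by rintro rfl; exact hrD hz⟩
          · exact absurd (by rw [← show z = w from h2]; exact hz) hwD'
        have hcS : c ∈ S \ {r} := hDS hc
        have hDC : D ⊆ compOf G (S \ {r}) c := subset_compOf hDS hconn hc
        obtain ⟨p, hp1, hp2⟩ := IH c hcS (hwS c) D (fun x hx => Or.inl (hDC hx))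
          ⟨c, hc⟩ hconn (fun hwD'' => absurd hwD'' hwD')
        exact ⟨p, hp1, hp2.trans ((hsubdep c hcS).trans (Nat.sub_le _ _))⟩

lemma elim_node_inv {S : Set V} {r : V} {anc : V → V → Prop}
    (hT : IsElimTree G S r anc) (hS : S ≠ {r}) :
    ∃ (root : V → V) (sub : V → V → V → Prop),
      (∀ c ∈ S \ {r}, IsElimTree G (compOf G (S \ {r}) c) (root c) (sub c)) ∧
      (∀ c ∈ S \ {r}, ∀ c' ∈ S \ {r},
        compOf G (S \ {r}) c = compOf G (S \ {r}) c' → root c = root c' ∧ sub c = sub c') ∧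
      (∀ a b, anc a b ↔ (a = r ∧ b ∈ S) ∨ ∃ c ∈ S \ {r}, sub c a b) := by
  cases hT with
  | single u => exact absurd rfl hS
  | node S r hr hS' root sub hsub hcong anc hanc => exact ⟨root, sub, hsub, hcong, hanc⟩

end Helpers3
/-- If `N(v)\{w} ⊇ N(w)\{v}` and `G[S]` (with `v, w ∈ S`) has an elimination
tree of depth `d` rooted at `w`, then it has an elimination tree of depth at most `d`
rooted at `v`. -/
theorem elimTree_reroot_of_dominates {V : Type*} [Fintype V] {G : SimpleGraph V}
    (hG : G.Connected) {v w : V} (hvw : v ≠ w)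
    (hdom : G.neighborSet w \ {v} ⊆ G.neighborSet v \ {w})
    {S : Set V} (hv : v ∈ S) (hw : w ∈ S) {anc : V → V → Prop} {d : ℕ}
    (hT : IsElimTree G S w anc) (hdepth : ancDepth anc S = d) :
    ∃ anc' : V → V → Prop, IsElimTree G S v anc' ∧ ancDepth anc' S ≤ d := by
  classical
  subst hdepth
  have hS : S ≠ {w} := by
    intro h
    rw [h] at hv
    exact hvw (by simpa using hv)
  obtain ⟨root, sub, hsub, hcong, hanc⟩ := elim_node_inv hT hS
  have hδ1 : 1 ≤ ancDepth anc S :=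
    one_le_ancDepth hw ((hanc w w).2 (Or.inl ⟨rfl, hw⟩))
  have hsubdep := subdepth_le hw hsub hcong hanc
  have hwS' : ∀ c : V, w ∉ compOf G (S \ {w}) c := fun c h => (compOf_subset h).2 rfl
  have hvA : v ∈ S \ {w} := ⟨hv, hvw⟩
  have hcomp : ∀ c ∈ S \ {v}, ∃ p : V × (V → V → Prop),
      IsElimTree G (compOf G (S \ {v}) c) p.1 p.2 ∧
      ancDepth p.2 (compOf G (S \ {v}) c) ≤ ancDepth anc S - 1 := by
    intro c hc
    have hDsub : compOf G (S \ {v}) c ⊆ S \ {v} := compOf_subset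
    have hDconn : ESConn G (compOf G (S \ {v}) c) := compOf_conn
    have hDne : (compOf G (S \ {v}) c).Nonempty := ⟨c, mem_compOf_self hc⟩
    by_cases hwD : w ∈ compOf G (S \ {v}) c
    · have hwB : w ∈ S \ {v} := hDsub hwD
      have hXA : ∀ z ∈ S \ {v}, z ≠ w → z ∈ S \ {w} := fun z hz hzw => ⟨hz.1, hzw⟩
      have hDC : compOf G (S \ {v}) c ⊆ compOf G (S \ {w}) v ∪ {w} := by
        intro x hx
        by_cases hxw : x = w
        · exact Or.inr hxw
        · obtain ⟨hxB, hcB, rxc⟩ := hx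
          obtain ⟨hwB', hcB', rwc⟩ := hwD
          exact Or.inl (absorb_into_comp hdom hvA (fun h => h.2 rfl) hwB hXA
            x hxB (rxc.trans rwc.symm) hxw)
      obtain ⟨p, hp1, hp2⟩ := key hvw hdom (hsub v hvA) (hwS' v) _ hDC hDne hDconn
        (fun _ => ⟨mem_compOf_self hvA, fun hvD => (hDsub hvD).2 rfl⟩)
      exact ⟨p, hp1, hp2.trans (hsubdep v hvA)⟩
    · have hDA : compOf G (S \ {v}) c ⊆ S \ {w} := by
        intro x hx
        refine ⟨(hDsub hx).1, ?_⟩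
        rintro rfl
        exact hwD hx
      have hcA : c ∈ S \ {w} := hDA (mem_compOf_self hc)
      have hDC : compOf G (S \ {v}) c ⊆ compOf G (S \ {w}) c :=
        subset_compOf hDA hDconn (mem_compOf_self hc)
      obtain ⟨p, hp1, hp2⟩ := key hvw hdom (hsub c hcA) (hwS' c) _
        (fun x hx => Or.inl (hDC hx)) hDne hDconn (fun h => absurd h hwD)
      exact ⟨p, hp1, hp2.trans (hsubdep c hcA)⟩
  obtain ⟨anc', htree, hdep⟩ := assemble hv _ hcomp
  exact ⟨anc', htree, by omega⟩
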